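/- Let K ≥ 2 and let θ_1, ..., θ_K be real numbers such that 1, cos(θ_1), ..., cos(θ_K) are linearly independent over ℚ; fix i ∈ {1, ..., K} and σ > 0. For transmit power P > 0 define the best achievable single-user rate over antenna separations R(P) := sup over positive integers d of log(1 + P·g(θ_i; d) / (P·∑_{k ≠ i} g(θ_k; d) + σ²)), where g(θ; d) := (1 + cos(2π·d·cos θ))/2. Then R(P)/log P → 1 as P → ∞; that is, each user achieves a full degree of freedom despite the presence of the K − 1 equal-power interferers. -/

import Mathlib

/-- Two-antenna array power gain toward a far-field source at angle `θ`,
for antenna separation `d` wavelengths and beamforming vector `(1,1)/√2`. -/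
noncomputable def arrayGain (θ : ℝ) (d : ℕ) : ℝ :=
  (1 + Real.cos (2 * Real.pi * d * Real.cos θ)) / 2

open Finset Complex Filter

lemma factor_expand (M : ℕ) (s u : ℂ) (hu : u ≠ 0) :
    ((1 + s * u) * (1 + s * u⁻¹) / 4) ^ M
      = ∑ ab ∈ (range (M + 1)) ×ˢ (range (M + 1)),
          ((M.choose ab.1 : ℂ) * M.choose ab.2 * s ^ (ab.1 + ab.2) / 4 ^ M)
            * u ^ ((ab.1 : ℤ) - ab.2) := by
  have h1 : (1 + s * u) ^ M = ∑ a ∈ range (M + 1), (M.choose a : ℂ) * (s * u) ^ a := by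
    rw [add_comm, add_pow]
    refine Finset.sum_congr rfl fun a _ => by ring
  have h2 : (1 + s * u⁻¹) ^ M = ∑ b ∈ range (M + 1), (M.choose b : ℂ) * (s * u⁻¹) ^ b := by
    rw [add_comm, add_pow]
    refine Finset.sum_congr rfl fun a _ => by ring
  rw [div_pow, mul_pow, h1, h2, Finset.sum_mul_sum, ← Finset.sum_product', Finset.sum_div]
  refine Finset.sum_congr rfl fun ab _ => ?_
  have : u ^ ((ab.1 : ℤ) - ab.2) = u ^ ab.1 * (u⁻¹) ^ ab.2 := by
    rw [zpow_sub₀ hu, zpow_natCast, zpow_natCast, div_eq_mul_inv, inv_pow]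
  rw [this]
  field_simp
  ring

lemma gain_factor (y sr : ℝ) (hs : sr = 1 ∨ sr = -1) :
    (((1 + sr * Real.cos y) / 2 : ℝ) : ℂ)
      = (1 + (sr : ℂ) * Complex.exp (y * I)) * (1 + (sr : ℂ) * (Complex.exp (y * I))⁻¹) / 4 := by
  set u := Complex.exp (y * I) with hu_def
  have hu : u ≠ 0 := Complex.exp_ne_zero _
  have huu : u * u⁻¹ = 1 := mul_inv_cancel₀ hu
  have hcos : u + u⁻¹ = 2 * (Real.cos y : ℂ) := by
    rw [hu_def, ← Complex.exp_neg, Complex.exp_mul_I, ← neg_mul, Complex.exp_mul_I]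
    push_cast
    rw [Complex.cos_neg, Complex.sin_neg]
    ring
  have hs2 : (sr : ℂ) ^ 2 = 1 := by rcases hs with h | h <;> norm_num [h]
  have expand : (1 + (sr : ℂ) * u) * (1 + (sr : ℂ) * u⁻¹)
      = 2 + (sr : ℂ) * (u + u⁻¹) := by
    have h : (1 + (sr : ℂ) * u) * (1 + (sr : ℂ) * u⁻¹)
        = 1 + (sr : ℂ) ^ 2 * (u * u⁻¹) + (sr : ℂ) * (u + u⁻¹) := by ring
    rw [h, huu, hs2]; ring
  rw [expand, hcos]
  push_cast
  ring

set_option maxHeartbeats 2000000 in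
lemma exists_good (K : ℕ) (θ : Fin K → ℝ)
    (hind : ∀ (q₀ : ℚ) (q : Fin K → ℚ),
      (q₀ : ℝ) + ∑ k, (q k : ℝ) * Real.cos (θ k) = 0 → q₀ = 0 ∧ ∀ k, q k = 0)
    (i : Fin K) {ε : ℝ} (hε : 0 < ε) :
    ∃ d : ℕ+, 1 / 2 ≤ arrayGain (θ i) d ∧ ∀ k, k ≠ i → arrayGain (θ k) d ≤ ε := by
  classical
  set δ : ℝ := min (1 / 2) ε with hδ_def
  have hδ0 : 0 < δ := lt_min (by norm_num) hε
  have hδhalf : δ ≤ 1 / 2 := min_le_left _ _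
  -- Step 1: choose m
  obtain ⟨m, hm1, hsmall⟩ :
      ∃ m : ℕ, 1 ≤ m ∧ (m : ℝ) ^ (2 * K) * ((1 - δ) ^ 2) ^ m < 1 / (2 * 4 ^ K) := by
    have h0 : (0 : ℝ) ≤ (1 - δ) ^ 2 := sq_nonneg _
    have h1 : (1 - δ) ^ 2 < 1 := by nlinarith
    have := tendsto_pow_const_mul_const_pow_of_lt_one (2 * K) h0 h1
    have hpos : (0 : ℝ) < 1 / (2 * 4 ^ K) := by positivity
    have := (this.eventually (eventually_lt_nhds hpos)).and (eventually_ge_atTop 1)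
    obtain ⟨m, hm, hm1⟩ := this.exists
    exact ⟨m, hm1, hm⟩
  set M := 2 * m with hM_def
  have hMpos : 0 < M := by omega
  set c : Fin K → ℝ := fun k => Real.cos (θ k) with hc_def
  set sr : Fin K → ℝ := fun k => if k = i then 1 else -1 with hsr_def
  have hsr_pm : ∀ k, sr k = 1 ∨ sr k = -1 := by
    intro k; by_cases h : k = i <;> simp [hsr_def, h]
  have hsr_sq : ∀ k, (sr k : ℝ) ^ 2 = 1 := by
    intro k; rcases hsr_pm k with h | h <;> rw [h] <;> norm_num
  set z : Fin K → ℂ := fun k => Complex.exp ((2 * Real.pi * c k : ℝ) * I) with hz_def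
  have hz0 : ∀ k, z k ≠ 0 := fun k => Complex.exp_ne_zero _
  have hzd : ∀ (k) (d : ℕ), z k ^ d = Complex.exp ((2 * Real.pi * d * c k : ℝ) * I) := by
    intro k d
    rw [hz_def, ← Complex.exp_nat_mul]
    congr 1
    push_cast
    ring
  set G : Fin K → ℕ → ℝ := fun k d => (1 + sr k * Real.cos (2 * Real.pi * d * c k)) / 2
    with hG_def
  have hG01 : ∀ k d, 0 ≤ G k d ∧ G k d ≤ 1 := by
    intro k d
    have h1 := Real.neg_one_le_cos (2 * Real.pi * d * c k)
    have h2 := Real.cos_le_one (2 * Real.pi * d * c k)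
    rcases hsr_pm k with h | h <;> constructor <;> simp only [hG_def, h] <;> nlinarith
  set F : ℕ → ℝ := fun d => ∏ k, G k d ^ M with hF_def
  set S : Finset (Fin K → ℕ × ℕ) :=
    Fintype.piFinset (fun _ : Fin K => (range (M + 1)) ×ˢ (range (M + 1))) with hS_def
  set coeff : (Fin K → ℕ × ℕ) → ℂ := fun p =>
    ∏ k, ((M.choose (p k).1 : ℂ) * M.choose (p k).2
      * ((sr k : ℝ) : ℂ) ^ ((p k).1 + (p k).2) / 4 ^ M) with hcoeff_def
  set W : (Fin K → ℕ × ℕ) → ℂ := fun p => ∏ k, z k ^ (((p k).1 : ℤ) - (p k).2) with hW_def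
  -- Brutal expansion identity
  have key_id : ∀ d : ℕ, (F d : ℂ) = ∑ p ∈ S, coeff p * W p ^ d := by
    intro d
    have cast1 : (F d : ℂ) = ∏ k, ((G k d : ℝ) : ℂ) ^ M := by
      rw [hF_def]; push_cast; rfl
    have per_k : ∀ k : Fin K, ((G k d : ℝ) : ℂ) ^ M
        = ∑ ab ∈ (range (M + 1)) ×ˢ (range (M + 1)),
            ((M.choose ab.1 : ℂ) * M.choose ab.2 * ((sr k : ℝ) : ℂ) ^ (ab.1 + ab.2) / 4 ^ M)
              * (z k ^ ((ab.1 : ℤ) - ab.2)) ^ d := by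
      intro k
      have hgf := gain_factor (2 * Real.pi * d * c k) (sr k) (hsr_pm k)
      have hu : Complex.exp ((2 * Real.pi * d * c k : ℝ) * I) = z k ^ d := (hzd k d).symm
      rw [hG_def]
      simp only []
      rw [hgf, hu, factor_expand M _ _ (pow_ne_zero _ (hz0 k))]
      refine Finset.sum_congr rfl fun ab _ => ?_
      congr 1
      rw [← zpow_natCast (z k) d, ← zpow_mul, mul_comm ((d:ℤ)), zpow_mul, zpow_natCast]
    rw [cast1]
    rw [Finset.prod_congr rfl fun k _ => per_k k]
    rw [Finset.prod_univ_sum]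
    refine Finset.sum_congr rfl fun p _ => ?_
    rw [Finset.prod_mul_distrib, hcoeff_def, hW_def]
    simp only []
    rw [← Finset.prod_pow]
  -- d ↦ W p = 1 forces diagonal
  have hW1 : ∀ p, W p = 1 → ∀ k, (p k).1 = (p k).2 := by
    intro p hW k
    have hWexp : W p = Complex.exp ((2 * Real.pi * ∑ k, (((p k).1 : ℝ) - (p k).2) * c k : ℝ) * I) := by
      rw [hW_def]
      simp only []
      have : ∀ k : Fin K, z k ^ (((p k).1 : ℤ) - (p k).2)
          = Complex.exp (((((p k).1 : ℝ) - (p k).2) * (2 * Real.pi * c k) : ℝ) * I) := by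
        intro k
        rw [hz_def]
        simp only []
        rw [← Complex.exp_int_mul]
        congr 1
        push_cast
        ring
      rw [Finset.prod_congr rfl fun k _ => this k, ← Complex.exp_sum]
      congr 1
      push_cast
      rw [Finset.mul_sum, Finset.sum_mul]
      refine Finset.sum_congr rfl fun k _ => by ring
    rw [hWexp, Complex.exp_eq_one_iff] at hW
    obtain ⟨n, hn⟩ := hW
    set β : ℝ := ∑ k, (((p k).1 : ℝ) - (p k).2) * c k with hβ_def
    have hI : (I : ℂ) ≠ 0 := Complex.I_ne_zero
    have h2π : ((2 * Real.pi : ℝ) : ℂ) ≠ 0 := by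
      simp [Real.pi_ne_zero]
    have hβn : β = n := by
      have h3 : 2 * Real.pi * β = (n : ℝ) * (2 * Real.pi) := by
        have := congrArg Complex.im hn
        simpa using this
      have h4 : 2 * Real.pi * β = 2 * Real.pi * (n : ℝ) := by linarith
      exact mul_left_cancel₀ (by simp [Real.pi_ne_zero]) h4
    have := hind (-(n : ℚ)) (fun k => ((p k).1 : ℚ) - (p k).2) ?_
    · have hk := this.2 k
      have : ((p k).1 : ℚ) = (p k).2 := by linarith [hk]
      exact_mod_cast this
    · push_cast
      rw [hβ_def, hc_def] at hβn
      simp only [] at hβn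
      linear_combination hβn
  -- diagonal facts
  have hdiagW : ∀ p : Fin K → ℕ × ℕ, (∀ k, (p k).1 = (p k).2) → W p = 1 := by
    intro p hp
    rw [hW_def]
    refine Finset.prod_eq_one fun k _ => ?_
    rw [hp k, sub_self, zpow_zero]
  have hcoeff_diag : ∀ p : Fin K → ℕ × ℕ, (∀ k, (p k).1 = (p k).2) →
      coeff p = ((∏ k, ((M.choose (p k).1 : ℝ) ^ 2 / 4 ^ M) : ℝ) : ℂ) := by
    intro p hp
    rw [hcoeff_def]
    push_cast
    refine Finset.prod_congr rfl fun k _ => ?_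
    have h1 : ((sr k : ℝ) : ℂ) ^ ((p k).1 + (p k).2) = 1 := by
      rw [← hp k, ← two_mul, pow_mul]
      have : ((sr k : ℝ) : ℂ) ^ 2 = 1 := by
        rcases hsr_pm k with h | h <;> rw [h] <;> norm_num
      rw [this, one_pow]
    rw [h1, hp k]
    ring
  -- the limit value
  set L : ℂ := ∑ p ∈ S, if W p = 1 then coeff p else 0 with hL_def
  set A : ℝ := (1 / (4 * (m : ℝ) ^ 2)) ^ K with hA_def
  have hA0 : 0 < A := by
    rw [hA_def]
    have : (0:ℝ) < (m:ℝ) := by exact_mod_cast hm1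
    positivity
  have hLre : A ≤ L.re := by
    have hre : L.re = ∑ p ∈ S, (if W p = 1 then coeff p else 0).re := by
      rw [hL_def, Complex.re_sum]
    set p₀ : Fin K → ℕ × ℕ := fun _ => (m, m) with hp₀_def
    have hp₀S : p₀ ∈ S := by
      rw [hS_def]
      refine Fintype.mem_piFinset.2 fun k => ?_
      simp only [hp₀_def, Finset.mem_product, Finset.mem_range]
      omega
    have hterm : ∀ p ∈ S, 0 ≤ (if W p = 1 then coeff p else 0).re := by
      intro p _
      by_cases hw : W p = 1
      · rw [if_pos hw, hcoeff_diag p (hW1 p hw), Complex.ofReal_re]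
        refine Finset.prod_nonneg fun k _ => by positivity
      · rw [if_neg hw]; simp
    have hp₀W : W p₀ = 1 := hdiagW p₀ (fun k => rfl)
    have hp₀val : (if W p₀ = 1 then coeff p₀ else 0).re
        = ∏ _k : Fin K, ((M.choose m : ℝ) ^ 2 / 4 ^ M) := by
      rw [if_pos hp₀W, hcoeff_diag p₀ (fun k => rfl), Complex.ofReal_re]
    have hbig : A ≤ (if W p₀ = 1 then coeff p₀ else 0).re := by
      rw [hp₀val, Finset.prod_const, Finset.card_univ, Fintype.card_fin, hA_def]
      have hmR : (0:ℝ) < (m:ℝ) := by exact_mod_cast hm1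
      refine pow_le_pow_left₀ (by positivity) ?_ K
      have hcb : (4:ℝ) ^ m ≤ 2 * m * (M.choose m) := by
        have := Nat.four_pow_le_two_mul_self_mul_centralBinom m hm1
        have h2' : Nat.centralBinom m = M.choose m := rfl
        calc (4:ℝ) ^ m ≤ ((2 * m * Nat.centralBinom m : ℕ) : ℝ) := by exact_mod_cast this
          _ = 2 * m * (M.choose m) := by rw [h2']; push_cast; ring
      have h4M : (4:ℝ) ^ M = (4 ^ m) * (4 ^ m) := by
        rw [hM_def, two_mul, pow_add]
      have hch : (0:ℝ) ≤ (M.choose m : ℝ) := by positivity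
      rw [div_le_div_iff₀ (by positivity) (by positivity)]
      calc 1 * (4:ℝ) ^ M = 4 ^ m * 4 ^ m := by rw [h4M]; ring
        _ ≤ (2 * m * (M.choose m)) * (2 * m * (M.choose m)) := by nlinarith [pow_pos (show (0:ℝ) < 4 by norm_num) m]
        _ = (M.choose m : ℝ) ^ 2 * (4 * m ^ 2) := by ring
    rw [hre]
    calc A ≤ (if W p₀ = 1 then coeff p₀ else 0).re := hbig
      _ ≤ ∑ p ∈ S, (if W p = 1 then coeff p else 0).re :=
        Finset.single_le_sum hterm hp₀S
  -- the averages converge to L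
  have hWnorm : ∀ p, ‖W p‖ = 1 := by
    intro p
    rw [hW_def]
    simp only [norm_prod]
    refine Finset.prod_eq_one fun k _ => ?_
    rw [norm_zpow, hz_def]
    simp [Complex.norm_exp]
  have havg : Filter.Tendsto (fun N : ℕ => (N : ℂ)⁻¹ * ∑ d ∈ Finset.Icc 1 N, (F d : ℂ))
      Filter.atTop (nhds L) := by
    have hrw : ∀ N : ℕ, (N : ℂ)⁻¹ * ∑ d ∈ Finset.Icc 1 N, (F d : ℂ)
        = ∑ p ∈ S, coeff p * ((N : ℂ)⁻¹ * ∑ d ∈ Finset.Icc 1 N, W p ^ d) := by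
      intro N
      rw [Finset.sum_congr rfl fun d _ => key_id d, Finset.sum_comm, Finset.mul_sum]
      refine Finset.sum_congr rfl fun p _ => ?_
      rw [Finset.mul_sum, Finset.mul_sum, Finset.mul_sum]
      refine Finset.sum_congr rfl fun d _ => by ring
    simp only [hrw]
    rw [hL_def]
    refine tendsto_finset_sum _ fun p _ => ?_
    by_cases hw : W p = 1
    · rw [if_pos hw]
      simp only [hw, one_pow, Finset.sum_const, Nat.card_Icc, nsmul_eq_mul, mul_one]
      have : ∀ᶠ N : ℕ in Filter.atTop,
          coeff p * ((N : ℂ)⁻¹ * (N + 1 - 1 : ℕ)) = coeff p := by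
        filter_upwards [Filter.eventually_ge_atTop 1] with N hN
        have hN0 : (N : ℂ) ≠ 0 := by
          exact_mod_cast Nat.cast_ne_zero.2 (by omega)
        rw [Nat.add_sub_cancel]
        field_simp
      exact Filter.Tendsto.congr' (Filter.EventuallyEq.symm this) tendsto_const_nhds
    · rw [if_neg hw]
      have hbound : ∀ N : ℕ, ‖(N : ℂ)⁻¹ * ∑ d ∈ Finset.Icc 1 N, W p ^ d‖
          ≤ (2 / ‖W p - 1‖) * (N : ℝ)⁻¹ := by
        intro N
        have hgeom : ∑ d ∈ Finset.Icc 1 N, W p ^ d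
            = (W p ^ (N + 1) - W p ^ 1) / (W p - 1) := by
          have : Finset.Icc 1 N = Finset.Ico 1 (N + 1) := by
            rw [Finset.Ico_add_one_right_eq_Icc]
          rw [this, geom_sum_Ico hw (by omega)]
        rw [hgeom]
        rw [norm_mul, norm_div, norm_inv]
        have h1 : ‖W p ^ (N + 1) - W p ^ 1‖ ≤ 2 := by
          calc ‖W p ^ (N + 1) - W p ^ 1‖
              ≤ ‖W p ^ (N + 1)‖ + ‖W p ^ 1‖ := by
                exact norm_sub_le _ _
            _ = 1 + 1 := by rw [norm_pow, norm_pow, hWnorm p]; norm_num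
            _ = 2 := by norm_num
        have h2 : 0 < ‖W p - 1‖ := by
          rw [norm_pos_iff]
          exact sub_ne_zero.2 hw
        have h3 : ‖(N : ℂ)‖ = (N : ℝ) := by
          rw [Complex.norm_natCast]
        rw [h3]
        rw [mul_comm (2 / ‖W p - 1‖)]
        gcongr
      have hb : ∀ N : ℕ, ‖coeff p * ((N : ℂ)⁻¹ * ∑ d ∈ Finset.Icc 1 N, W p ^ d)‖
          ≤ ‖coeff p‖ * ((2 / ‖W p - 1‖) * (N : ℝ)⁻¹) := by
        intro N
        calc ‖coeff p * ((N : ℂ)⁻¹ * ∑ d ∈ Finset.Icc 1 N, W p ^ d)‖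
            = ‖coeff p‖ * ‖(N : ℂ)⁻¹ * ∑ d ∈ Finset.Icc 1 N, W p ^ d‖ := by
              rw [norm_mul]
          _ ≤ ‖coeff p‖ * ((2 / ‖W p - 1‖) * (N : ℝ)⁻¹) := by
              exact mul_le_mul_of_nonneg_left (hbound N) (norm_nonneg _)
      have htend : Filter.Tendsto
          (fun N : ℕ => ‖coeff p‖ * ((2 / ‖W p - 1‖) * (N : ℝ)⁻¹))
          Filter.atTop (nhds 0) := by
        have h0 : Filter.Tendsto (fun N : ℕ => (N : ℝ)⁻¹) Filter.atTop (nhds 0) :=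
          tendsto_inv_atTop_nhds_zero_nat
        have h1 := h0.const_mul (‖coeff p‖ * (2 / ‖W p - 1‖))
        simp only [mul_zero] at h1
        refine h1.congr fun N => by ring
      exact squeeze_zero_norm hb htend
  -- extract a good d
  have hexists : ∃ d : ℕ, 1 ≤ d ∧ A / 2 ≤ F d := by
    obtain ⟨N₀, hN₀⟩ := (Metric.tendsto_atTop.1 havg) (A / 2) (by positivity)
    set N : ℕ := max N₀ 1 with hN_def
    have hdist := hN₀ N (le_max_left _ _)
    have hN1 : 1 ≤ N := le_max_right _ _
    have hNR : (0:ℝ) < (N:ℝ) := by exact_mod_cast hN1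
    have hre : ((N : ℂ)⁻¹ * ∑ d ∈ Finset.Icc 1 N, (F d : ℂ)).re
        = (N : ℝ)⁻¹ * ∑ d ∈ Finset.Icc 1 N, F d := by
      have : (N : ℂ)⁻¹ * ∑ d ∈ Finset.Icc 1 N, (F d : ℂ)
          = (((N : ℝ)⁻¹ * ∑ d ∈ Finset.Icc 1 N, F d : ℝ) : ℂ) := by
        push_cast; ring
      rw [this, Complex.ofReal_re]
    have hrelb : A / 2 < (N : ℝ)⁻¹ * ∑ d ∈ Finset.Icc 1 N, F d := by
      have h1 : |(((N : ℂ)⁻¹ * ∑ d ∈ Finset.Icc 1 N, (F d : ℂ)) - L).re|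
          ≤ dist ((N : ℂ)⁻¹ * ∑ d ∈ Finset.Icc 1 N, (F d : ℂ)) L := by
        rw [Complex.dist_eq]
        exact Complex.abs_re_le_norm _
      have h2 := abs_le.1 h1
      have h3 : (((N : ℂ)⁻¹ * ∑ d ∈ Finset.Icc 1 N, (F d : ℂ)) - L).re
          = ((N : ℝ)⁻¹ * ∑ d ∈ Finset.Icc 1 N, F d) - L.re := by
        rw [Complex.sub_re, hre]
      rw [h3] at h2
      have := h2.1
      linarith [hdist, hLre]
    by_contra hcon
    push_neg at hcon
    have hub : ∑ d ∈ Finset.Icc 1 N, F d ≤ N * (A / 2) := by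
      calc ∑ d ∈ Finset.Icc 1 N, F d ≤ ∑ _d ∈ Finset.Icc 1 N, (A / 2) := by
            refine Finset.sum_le_sum fun d hd => ?_
            have hd1 : 1 ≤ d := (Finset.mem_Icc.1 hd).1
            exact le_of_lt (hcon d hd1)
        _ = N * (A / 2) := by
            rw [Finset.sum_const, Nat.card_Icc, Nat.add_sub_cancel, nsmul_eq_mul]
    have : (N : ℝ)⁻¹ * ∑ d ∈ Finset.Icc 1 N, F d ≤ A / 2 := by
      rw [inv_mul_le_iff₀ hNR]
      linarith [hub]
    linarith
  obtain ⟨d, hd1, hdF⟩ := hexists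
  -- individual factor bounds
  have hfac : ∀ k, A / 2 ≤ G k d ^ M := by
    intro k
    have h1 : F d = G k d ^ M * ∏ j ∈ Finset.univ.erase k, G j d ^ M :=
      (Finset.mul_prod_erase Finset.univ _ (Finset.mem_univ k)).symm
    have h2 : ∏ j ∈ Finset.univ.erase k, G j d ^ M ≤ 1 :=
      Finset.prod_le_one (fun j _ => pow_nonneg (hG01 j d).1 _)
        (fun j _ => pow_le_one₀ (hG01 j d).1 (hG01 j d).2)
    have h3 : 0 ≤ G k d ^ M := pow_nonneg (hG01 k d).1 _
    nlinarith [hdF]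
  have hGlb : ∀ k, 1 - δ ≤ G k d := by
    intro k
    by_contra hcon
    push_neg at hcon
    have h1 : G k d ^ M < (1 - δ) ^ M :=
      pow_lt_pow_left₀ hcon (hG01 k d).1 (by omega)
    have h2 : (1 - δ) ^ M = ((1 - δ) ^ 2) ^ m := by
      rw [← pow_mul, hM_def]
    have hmR : (0:ℝ) < (m:ℝ) := by exact_mod_cast hm1
    have hA2 : A / 2 = 1 / (2 * 4 ^ K * ((m:ℝ) ^ 2) ^ K) := by
      rw [hA_def, div_pow, one_pow, mul_pow]
      field_simp
    have hm2K : ((m:ℝ) ^ 2) ^ K = (m:ℝ) ^ (2 * K) := by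
      rw [← pow_mul]
    have hsmall' : ((1 - δ) ^ 2) ^ m < A / 2 := by
      rw [hA2, hm2K]
      rw [lt_div_iff₀ (by positivity)]
      calc ((1 - δ) ^ 2) ^ m * (2 * 4 ^ K * (m:ℝ) ^ (2 * K))
          = ((m:ℝ) ^ (2 * K) * ((1 - δ) ^ 2) ^ m) * (2 * 4 ^ K) := by ring
        _ < (1 / (2 * 4 ^ K)) * (2 * 4 ^ K) := by
            refine mul_lt_mul_of_pos_right hsmall (by positivity)
        _ = 1 := by field_simp
    have := hfac k
    rw [h2] at h1
    linarith
  -- conclude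
  have hd0 : 0 < d := hd1
  refine ⟨⟨d, hd0⟩, ?_, ?_⟩
  · have hGi : G i d = arrayGain (θ i) d := by
      simp [hG_def, hsr_def, hc_def, arrayGain]
    have h := hGlb i
    simp only [PNat.mk_coe]
    rw [← hGi]
    linarith [hδhalf]
  · intro k hk
    have hGk : G k d = 1 - arrayGain (θ k) d := by
      simp only [hG_def, hsr_def, hc_def, arrayGain, if_neg hk]
      ring
    have h := hGlb k
    rw [hGk] at h
    have hδε : δ ≤ ε := min_le_right _ _
    simp only [PNat.mk_coe]
    linarith

lemma arrayGain_nonneg (t : ℝ) (d : ℕ) : 0 ≤ arrayGain t d := by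
  unfold arrayGain
  nlinarith [Real.neg_one_le_cos (2 * Real.pi * d * Real.cos t)]

lemma arrayGain_le_one (t : ℝ) (d : ℕ) : arrayGain t d ≤ 1 := by
  unfold arrayGain
  nlinarith [Real.cos_le_one (2 * Real.pi * d * Real.cos t)]

lemma aux_lim {c : ℝ} (hc : 0 < c) :
    Filter.Tendsto (fun P : ℝ => Real.log (1 + P / c) / Real.log P) Filter.atTop (nhds 1) := by
  have h0 : Filter.Tendsto (fun P : ℝ => c / P) Filter.atTop (nhds 0) :=
    tendsto_const_nhds.div_atTop Filter.tendsto_id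
  have h1 : Filter.Tendsto (fun P : ℝ => Real.log (1 + c / P) - Real.log c)
      Filter.atTop (nhds (Real.log 1 - Real.log c)) := by
    refine Filter.Tendsto.sub_const ?_ _
    have hcont : ContinuousAt Real.log 1 := Real.continuousAt_log (by norm_num)
    have : Filter.Tendsto (fun P : ℝ => 1 + c / P) Filter.atTop (nhds 1) := by
      have := tendsto_const_nhds.add h0 (f := fun _ : ℝ => (1:ℝ))
      simpa using this
    exact hcont.tendsto.comp this
  have h2 : Filter.Tendsto (fun P : ℝ => (Real.log P)⁻¹) Filter.atTop (nhds 0) :=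
    Real.tendsto_log_atTop.inv_tendsto_atTop
  have h3 := h1.mul h2
  rw [mul_zero] at h3
  have h4 : Filter.Tendsto (fun P : ℝ =>
      1 + (Real.log (1 + c / P) - Real.log c) * (Real.log P)⁻¹) Filter.atTop (nhds (1 + 0)) :=
    tendsto_const_nhds.add h3
  rw [add_zero] at h4
  refine Filter.Tendsto.congr' ?_ h4
  filter_upwards [Filter.eventually_ge_atTop (2 : ℝ)] with P hP
  have hP0 : (0:ℝ) < P := by linarith
  have hlogP : 0 < Real.log P := Real.log_pos (by linarith)
  have hcP : 0 < 1 + c / P := by positivity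
  have e1 : 1 + P / c = (c + P) / c := by field_simp
  have e2 : Real.log (1 + P / c) = Real.log (c + P) - Real.log c := by
    rw [e1, Real.log_div (by positivity) (by positivity)]
  have e3 : Real.log (c + P) = Real.log P + Real.log (1 + c / P) := by
    have : c + P = P * (1 + c / P) := by field_simp; ring
    rw [this, Real.log_mul (by positivity) (by positivity)]
  rw [eq_comm]
  rw [e2, e3]
  field_simp
  ring


/-- **Full degree of freedom per user.** Let `1, cos θ₁, …, cos θ_K` be linearly
independent over `ℚ` and let all `K` users transmit with equal power `P` over
noise power `σ²`. Define the best achievable rate of user `i` over integer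
antenna separations,
`R(P) = sup_d log(1 + P·g(θᵢ;d) / (P·∑_{k≠i} g(θₖ;d) + σ²))`.
Then `R(P)/log P → 1` as `P → ∞`: user `i` achieves a full degree of freedom. -/
theorem full_degree_of_freedom (K : ℕ) (hK : 2 ≤ K) (θ : Fin K → ℝ)
    (hind : ∀ (q₀ : ℚ) (q : Fin K → ℚ),
      (q₀ : ℝ) + ∑ k, (q k : ℝ) * Real.cos (θ k) = 0 → q₀ = 0 ∧ ∀ k, q k = 0)
    (i : Fin K) (σ : ℝ) (hσ : 0 < σ)
    (R : ℝ → ℝ)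
    (hR : ∀ P : ℝ, R P = ⨆ d : ℕ+,
      Real.log (1 + P * arrayGain (θ i) d /
        (P * (∑ k ∈ Finset.univ.erase i, arrayGain (θ k) d) + σ ^ 2))) :
    Filter.Tendsto (fun P : ℝ => R P / Real.log P)
      Filter.atTop (nhds 1) := by
  classical
  set T : ℝ → ℕ+ → ℝ := fun P d => Real.log (1 + P * arrayGain (θ i) d /
      (P * (∑ k ∈ Finset.univ.erase i, arrayGain (θ k) d) + σ ^ 2)) with hT_def
  have hI_nonneg : ∀ d : ℕ+, 0 ≤ ∑ k ∈ Finset.univ.erase i, arrayGain (θ k) d :=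
    fun d => Finset.sum_nonneg fun k _ => arrayGain_nonneg _ _
  have hden_pos : ∀ P : ℝ, 0 ≤ P → ∀ d : ℕ+,
      0 < P * (∑ k ∈ Finset.univ.erase i, arrayGain (θ k) d) + σ ^ 2 := by
    intro P hP d
    have := hI_nonneg d
    nlinarith
  have hterm_nonneg : ∀ P : ℝ, 0 ≤ P → ∀ d : ℕ+, 0 ≤ T P d := by
    intro P hP d
    refine Real.log_nonneg ?_
    have h1 := hden_pos P hP d
    have h2 : 0 ≤ P * arrayGain (θ i) d := mul_nonneg hP (arrayGain_nonneg _ _)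
    have := div_nonneg h2 h1.le
    linarith
  have hterm_ub : ∀ P : ℝ, 0 < P → ∀ d : ℕ+, T P d ≤ Real.log (1 + P / σ ^ 2) := by
    intro P hP d
    refine Real.log_le_log ?_ ?_
    · have h1 := hden_pos P hP.le d
      have h2 : 0 ≤ P * arrayGain (θ i) d := mul_nonneg hP.le (arrayGain_nonneg _ _)
      have := div_nonneg h2 h1.le
      linarith
    · have h1 : P * arrayGain (θ i) d / (P * (∑ k ∈ Finset.univ.erase i, arrayGain (θ k) d) + σ ^ 2)
          ≤ P / σ ^ 2 := by
        refine div_le_div₀ (by positivity) ?_ (by positivity) ?_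
        · have := arrayGain_le_one (θ i) d
          nlinarith
        · have := mul_nonneg hP.le (hI_nonneg d)
          linarith
      linarith
  have hBdd : ∀ P : ℝ, 0 < P → BddAbove (Set.range fun d : ℕ+ => T P d) := by
    intro P hP
    exact ⟨Real.log (1 + P / σ ^ 2), by rintro x ⟨d, rfl⟩; exact hterm_ub P hP d⟩
  have hub : ∀ P : ℝ, 0 < P → R P ≤ Real.log (1 + P / σ ^ 2) := by
    intro P hP
    rw [hR P]
    exact ciSup_le fun d => hterm_ub P hP d
  have hlb : ∀ P : ℝ, 1 ≤ P → Real.log (1 + P / (2 * (1 + σ ^ 2))) ≤ R P := by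
    intro P hP
    have hP0 : (0:ℝ) < P := by linarith
    have hKpos : (0:ℝ) < K := by exact_mod_cast (by omega : 0 < K)
    obtain ⟨d, hdi, hdk⟩ := exists_good K θ hind i
      (ε := 1 / (P * K)) (by positivity)
    have hIub : ∑ k ∈ Finset.univ.erase i, arrayGain (θ k) d ≤ 1 / P := by
      calc ∑ k ∈ Finset.univ.erase i, arrayGain (θ k) d
          ≤ ∑ _k ∈ Finset.univ.erase i, 1 / (P * K) := by
            refine Finset.sum_le_sum fun k hk => hdk k (Finset.ne_of_mem_erase hk)
        _ = (Finset.univ.erase i).card * (1 / (P * K)) := by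
            rw [Finset.sum_const, nsmul_eq_mul]
        _ ≤ K * (1 / (P * K)) := by
            have hcard : (Finset.univ.erase i).card ≤ K := by
              calc (Finset.univ.erase i).card ≤ Finset.univ.card := Finset.card_erase_le.trans (le_refl _)
                _ = K := by simp
            have : ((Finset.univ.erase i).card : ℝ) ≤ (K : ℝ) := by exact_mod_cast hcard
            have hpos : (0:ℝ) ≤ 1 / (P * K) := by positivity
            nlinarith
        _ = 1 / P := by field_simp
    have hTlb : Real.log (1 + P / (2 * (1 + σ ^ 2))) ≤ T P d := by
      refine Real.log_le_log (by positivity) ?_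
      have hratio : P / (2 * (1 + σ ^ 2)) ≤ P * arrayGain (θ i) d /
          (P * (∑ k ∈ Finset.univ.erase i, arrayGain (θ k) d) + σ ^ 2) := by
        have hnum : P / 2 ≤ P * arrayGain (θ i) d := by nlinarith [hdi]
        have hdenub : P * (∑ k ∈ Finset.univ.erase i, arrayGain (θ k) d) + σ ^ 2
            ≤ 1 + σ ^ 2 := by
          have := mul_le_mul_of_nonneg_left hIub hP0.le
          have h2 : P * (1 / P) = 1 := by field_simp
          nlinarith [hI_nonneg d]
        have hden := hden_pos P hP0.le d
        calc P / (2 * (1 + σ ^ 2)) = (P / 2) / (1 + σ ^ 2) := by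
              rw [div_div]
          _ ≤ (P * arrayGain (θ i) d) / (P * (∑ k ∈ Finset.univ.erase i, arrayGain (θ k) d) + σ ^ 2) := by
              refine div_le_div₀ (by positivity) hnum hden hdenub
      linarith
    calc Real.log (1 + P / (2 * (1 + σ ^ 2))) ≤ T P d := hTlb
      _ ≤ R P := by
          rw [hR P]
          exact le_ciSup (hBdd P hP0) d
  -- squeeze
  have hlim1 : Filter.Tendsto
      (fun P : ℝ => Real.log (1 + P / (2 * (1 + σ ^ 2))) / Real.log P)
      Filter.atTop (nhds 1) := aux_lim (by positivity)
  have hlim2 : Filter.Tendsto (fun P : ℝ => Real.log (1 + P / σ ^ 2) / Real.log P)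
      Filter.atTop (nhds 1) := aux_lim (by positivity)
  refine tendsto_of_tendsto_of_tendsto_of_le_of_le' hlim1 hlim2 ?_ ?_
  · filter_upwards [Filter.eventually_ge_atTop (2 : ℝ)] with P hP
    have hlogP : 0 < Real.log P := Real.log_pos (by linarith)
    exact div_le_div_of_nonneg_right (hlb P (by linarith)) hlogP.le
  · filter_upwards [Filter.eventually_ge_atTop (2 : ℝ)] with P hP
    have hlogP : 0 < Real.log P := Real.log_pos (by linarith)
    exact div_le_div_of_nonneg_right (hub P (by linarith)) hlogP.le
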